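/- Let μ be a nonzero finite Borel measure on S^{n-1} not concentrated on any closed hemisphere, i.e., ∫_{S^{n-1}} max(⟨u,v⟩,0) dμ(u) > 0 for all v ∈ S^{n-1}. Let K_i be convex bodies containing the origin in their interiors whose polar bodies K_i^* are contained in a fixed ball RB^n, and suppose K_i^* → L in the Hausdorff metric where L is a convex body with the origin on its boundary. Let φ:(0,∞)→ℝ be continuous, strictly increasing, with φ(t)→∞ as t→∞. Then (1/|μ|)∫_{S^{n-1}} φ(h_{K_i}(u)) dμ(u) → ∞ as i→∞. -/

import Mathlib

/-!
A supporting hyperplane of `L` at the boundary point `o` gives a unit vector `w` with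
`⟪y, w⟫ ≤ 0` on `L`; since `h_A ≤ h_B + d_H(A, B)`, this forces `h_{K_i^*}(w) → 0`.
For `h_{K_i}(u) > 0` the point `u / h_{K_i}(u)` lies in `K_i^*`, whence
`⟪u, w⟫ ≤ h_{K_i^*}(w) h_{K_i}(u)`: so `h_{K_i} → ∞` uniformly on the cap `{⟪u, w⟫ ≥ ε}`,
which has positive `μ`-measure for some `ε > 0` because `μ` is not concentrated on a closed
hemisphere. On the rest of the sphere `h_{K_i} ≥ 1/R` because `K_i^* ⊆ R B^n`, so
`φ ∘ h_{K_i} ≥ φ(1/R)` there and the integrals diverge.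
-/

open MeasureTheory Metric Set Filter
open scoped RealInnerProductSpace NNReal ENNReal Topology

noncomputable section

abbrev Euc (n : ℕ) := EuclideanSpace ℝ (Fin n)

def usphere (n : ℕ) : Set (Euc n) := Metric.sphere 0 1

def smeas (n : ℕ) : Measure (Euc n) := (μH[(n : ℝ) - 1]).restrict (usphere n)


def polarBody (n : ℕ) (K : Set (Euc n)) : Set (Euc n) := {x | ∀ y ∈ K, ⟪x, y⟫ ≤ 1}

def suppFn (n : ℕ) (K : Set (Euc n)) (u : Euc n) : ℝ := sSup ((fun y => ⟪y, u⟫) '' K)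

def radialFn (n : ℕ) (K : Set (Euc n)) (x : Euc n) : ℝ := sSup {t : ℝ | 0 ≤ t ∧ t • x ∈ K}

section SupportFunction

variable {n : ℕ} {K : Set (Euc n)}

lemma bddAbove_inner_image (hb : Bornology.IsBounded K) (u : Euc n) :
    BddAbove ((fun y => ⟪y, u⟫) '' K) := by
  obtain ⟨C, hC⟩ := hb.exists_norm_le
  refine ⟨C * ‖u‖, ?_⟩
  rintro _ ⟨y, hy, rfl⟩
  exact (real_inner_le_norm y u).trans (mul_le_mul_of_nonneg_right (hC y hy) (norm_nonneg u))

lemma le_suppFn (hb : Bornology.IsBounded K) {y : Euc n} (hy : y ∈ K) (u : Euc n) :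
    ⟪y, u⟫ ≤ suppFn n K u :=
  le_csSup (bddAbove_inner_image hb u) ⟨y, hy, rfl⟩

lemma suppFn_le (hK : K.Nonempty) {u : Euc n} {a : ℝ} (h : ∀ y ∈ K, ⟪y, u⟫ ≤ a) :
    suppFn n K u ≤ a :=
  csSup_le (hK.image _) (by rintro _ ⟨y, hy, rfl⟩; exact h y hy)

lemma suppFn_pos (hb : Bornology.IsBounded K) (h0 : 0 ∈ interior K) {u : Euc n} (hu : u ≠ 0) :
    0 < suppFn n K u := by
  obtain ⟨r, hr, hball⟩ := Metric.mem_nhds_iff.1 (mem_interior_iff_mem_nhds.1 h0)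
  have hu' : 0 < ‖u‖ := norm_pos_iff.2 hu
  have hmem : (r / 2 / ‖u‖) • u ∈ K := hball <| by
    rw [mem_ball_zero_iff, norm_smul, Real.norm_of_nonneg (by positivity),
      div_mul_cancel₀ _ hu'.ne']
    linarith
  calc 0 < r / 2 / ‖u‖ * ⟪u, u⟫ := by rw [real_inner_self_eq_norm_sq]; positivity
    _ = ⟪(r / 2 / ‖u‖) • u, u⟫ := (real_inner_smul_left _ _ _).symm
    _ ≤ suppFn n K u := le_suppFn hb hmem u

lemma continuous_suppFn (hb : Bornology.IsBounded K) (hK : K.Nonempty) :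
    Continuous (suppFn n K) := by
  obtain ⟨C, hC⟩ := hb.exists_norm_le
  refine (LipschitzWith.of_le_add_mul' C fun u v => suppFn_le hK fun y hy => ?_).continuous
  calc ⟪y, u⟫ = ⟪y, v⟫ + ⟪y, u - v⟫ := by rw [inner_sub_right]; ring
    _ ≤ suppFn n K v + ‖y‖ * ‖u - v‖ := add_le_add (le_suppFn hb hy v) (real_inner_le_norm _ _)
    _ ≤ suppFn n K v + C * dist u v := by
      rw [dist_eq_norm]; gcongr; exact hC y hy

lemma zero_mem_polarBody : (0 : Euc n) ∈ polarBody n K := fun y _ => by simp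

lemma smul_mem_polarBody (hb : Bornology.IsBounded K) {u : Euc n} {t : ℝ} (ht : 0 ≤ t)
    (h : t * suppFn n K u ≤ 1) : t • u ∈ polarBody n K := fun y hy =>
  calc ⟪t • u, y⟫ = t * ⟪y, u⟫ := by rw [real_inner_smul_left, real_inner_comm]
    _ ≤ t * suppFn n K u := mul_le_mul_of_nonneg_left (le_suppFn hb hy u) ht
    _ ≤ 1 := h

lemma inv_suppFn_smul_mem_polarBody (hb : Bornology.IsBounded K) {u : Euc n}
    (hpos : 0 < suppFn n K u) : (suppFn n K u)⁻¹ • u ∈ polarBody n K :=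
  smul_mem_polarBody hb (inv_nonneg.2 hpos.le) (inv_mul_cancel₀ hpos.ne').le

lemma inv_le_suppFn_of_polarBody_subset (hb : Bornology.IsBounded K) {R : ℝ}
    (hKR : polarBody n K ⊆ closedBall 0 R) {u : Euc n} (hu : ‖u‖ = 1)
    (hpos : 0 < suppFn n K u) : R⁻¹ ≤ suppFn n K u := by
  have h := hKR (inv_suppFn_smul_mem_polarBody hb hpos)
  rw [mem_closedBall_zero_iff, norm_smul, hu, mul_one,
    Real.norm_of_nonneg (inv_nonneg.2 hpos.le)] at h
  exact inv_le_of_inv_le₀ hpos h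

lemma inner_le_suppFn_polarBody_mul_suppFn (hb : Bornology.IsBounded K)
    (hb' : Bornology.IsBounded (polarBody n K)) {u : Euc n} (hpos : 0 < suppFn n K u)
    (w : Euc n) : ⟪u, w⟫ ≤ suppFn n (polarBody n K) w * suppFn n K u := by
  have h := le_suppFn hb' (inv_suppFn_smul_mem_polarBody hb hpos) w
  rw [real_inner_smul_left, inv_mul_le_iff₀ hpos, mul_comm] at h
  exact h

lemma suppFn_le_add_hausdorffDist {A B : Set (Euc n)} (hA : Bornology.IsBounded A)
    (hA0 : A.Nonempty) (hB : IsCompact B) (hB0 : B.Nonempty) (u : Euc n) :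
    suppFn n A u ≤ suppFn n B u + hausdorffDist A B * ‖u‖ := by
  refine suppFn_le hA0 fun y hy => ?_
  obtain ⟨z, hz, hdist⟩ := hB.exists_infDist_eq_dist hB0 y
  have hyz : dist y z ≤ hausdorffDist A B := hdist ▸ infDist_le_hausdorffDist_of_mem hy
    (hausdorffEDist_ne_top_of_nonempty_of_bounded hA0 hB0 hA hB.isBounded)
  calc ⟪y, u⟫ = ⟪z, u⟫ + ⟪y - z, u⟫ := by rw [inner_sub_left]; ring
    _ ≤ suppFn n B u + ‖y - z‖ * ‖u‖ :=
      add_le_add (le_suppFn hB.isBounded hz u) (real_inner_le_norm _ _)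
    _ ≤ suppFn n B u + hausdorffDist A B * ‖u‖ := by
      rw [← dist_eq_norm]; gcongr

lemma tendsto_suppFn_of_tendsto_hausdorffDist {ι : Type*} {l : Filter ι} {A : ι → Set (Euc n)}
    {B : Set (Euc n)} (hA : ∀ i, Bornology.IsBounded (A i)) (hA0 : ∀ i, 0 ∈ A i)
    (hB : IsCompact B) (hB0 : B.Nonempty) {w : Euc n} (hw : ‖w‖ = 1)
    (hBw : ∀ y ∈ B, ⟪y, w⟫ ≤ 0) (hAB : Tendsto (fun i => hausdorffDist (A i) B) l (𝓝 0)) :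
    Tendsto (fun i => suppFn n (A i) w) l (𝓝 0) := by
  refine squeeze_zero (fun i => by simpa using le_suppFn (hA i) (hA0 i) w) (fun i => ?_) hAB
  have hBw' : suppFn n B w ≤ 0 := suppFn_le hB0 hBw
  refine (suppFn_le_add_hausdorffDist (hA i) ⟨0, hA0 i⟩ hB hB0 w).trans ?_
  rw [hw, mul_one]
  linarith

end SupportFunction

lemma eventually_le_suppFn_of_tendsto_suppFn_polarBody {ι : Type*} {l : Filter ι}
    {n : ℕ} {K : ι → Set (Euc n)} (hKb : ∀ i, Bornology.IsBounded (K i))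
    (hK0 : ∀ i, 0 ∈ interior (K i)) (hKb' : ∀ i, Bornology.IsBounded (polarBody n (K i)))
    {w : Euc n} (hw : Tendsto (fun i => suppFn n (polarBody n (K i)) w) l (𝓝 0))
    {ε : ℝ} (hε : 0 < ε) (T : ℝ) :
    ∀ᶠ i in l, ∀ u : Euc n, ε ≤ ⟪u, w⟫ → T ≤ suppFn n (K i) u := by
  filter_upwards [(hw.mul_const T).eventually_lt_const (by simpa using hε)] with i hi u hu
  have hu0 : u ≠ 0 := by rintro rfl; simp at hu; linarith
  have hpos := suppFn_pos (hKb i) (hK0 i) hu0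
  have hs0 : 0 ≤ suppFn n (polarBody n (K i)) w := by
    simpa using le_suppFn (hKb' i) zero_mem_polarBody w
  refine (lt_of_mul_lt_mul_left ?_ hs0).le
  exact hi.trans_le (hu.trans (inner_le_suppFn_polarBody_mul_suppFn (hKb i) (hKb' i) hpos w))

lemma exists_unit_inner_le_of_notMem_interior {E : Type*} [NormedAddCommGroup E]
    [InnerProductSpace ℝ E] [CompleteSpace E] {A : Set E} (hA : Convex ℝ A)
    (hAint : (interior A).Nonempty) {x : E} (hx : x ∉ interior A) :
    ∃ w : E, ‖w‖ = 1 ∧ ∀ y ∈ A, ⟪y, w⟫ ≤ ⟪x, w⟫ := by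
  obtain ⟨f, hf0, hf⟩ := geometric_hahn_banach_of_nonempty_interior_point hA hx hAint
  set v := (InnerProductSpace.toDual ℝ E).symm f
  have hv : 0 < ‖v‖ := by simpa [v] using hf0
  refine ⟨‖v‖⁻¹ • v, by rw [norm_smul, norm_inv, norm_norm, inv_mul_cancel₀ hv.ne'], fun y hy => ?_⟩
  have hvf : ∀ z, ⟪z, v⟫ = f z := fun z => by
    rw [real_inner_comm, InnerProductSpace.toDual_symm_apply]
  simp only [real_inner_smul_right, hvf]
  exact mul_le_mul_of_nonneg_left (hf y hy) (by positivity)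

section Measure

variable {X : Type*} [MeasurableSpace X] {μ : Measure X}

lemma exists_pos_measure_setOf_le_of_integral_max_pos {f : X → ℝ}
    (h : 0 < ∫ x, max (f x) 0 ∂μ) : ∃ ε > 0, μ {x | ε ≤ f x} ≠ 0 := by
  by_contra! hnull
  have hpos : μ {x | 0 < f x} = 0 := by
    refine measure_mono_null (fun x hx => mem_iUnion.2 ?_) (measure_iUnion_null fun k : ℕ =>
      hnull (1 / (k + 1)) Nat.one_div_pos_of_nat)
    obtain ⟨k, hk⟩ := exists_nat_one_div_lt (show 0 < f x from hx)
    exact ⟨k, hk.le⟩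
  refine h.ne' (integral_eq_zero_of_ae ?_)
  filter_upwards [measure_eq_zero_iff_ae_notMem.1 hpos] with x hx
  exact max_eq_right (not_lt.1 hx)

lemma tendsto_integral_atTop_of_tendsto_atTop_on {ι : Type*} {l : Filter ι} [IsFiniteMeasure μ]
    {f : ι → X → ℝ} {A : Set X} (hA : MeasurableSet A) (hμA : μ A ≠ 0) (c : ℝ)
    (hint : ∀ i, Integrable (f i) μ) (hc : ∀ i, ∀ᵐ x ∂μ, c ≤ f i x)
    (hAtop : ∀ M, ∀ᶠ i in l, ∀ᵐ x ∂μ, x ∈ A → M ≤ f i x) :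
    Tendsto (fun i => ∫ x, f i x ∂μ) l atTop := by
  have ha : 0 < μ.real A := ENNReal.toReal_pos hμA (measure_ne_top μ A)
  refine tendsto_atTop.2 fun M => ?_
  set T := c + (M - c * μ.real univ) / μ.real A
  filter_upwards [hAtop T] with i hi
  have hg : Integrable (fun x => c + A.indicator (fun _ => T - c) x) μ :=
    (integrable_const c).add ((integrable_const _).indicator hA)
  calc M = ∫ x, c + A.indicator (fun _ => T - c) x ∂μ := by
        rw [integral_add (integrable_const c) ((integrable_const _).indicator hA),
          integral_const, integral_indicator_const _ hA]
        simp only [T, smul_eq_mul]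
        field_simp
        ring
    _ ≤ ∫ x, f i x ∂μ := integral_mono_ae hg (hint i) <| by
        filter_upwards [hi, hc i] with x hxA hxc
        by_cases hx : x ∈ A
        · simpa [hx] using hxA hx
        · simpa [hx] using hxc

lemma integrable_of_continuousOn_of_measure_compl_eq_zero [TopologicalSpace X] [T2Space X]
    [OpensMeasurableSpace X] [IsFiniteMeasure μ] {S : Set X} (hS : IsCompact S)
    (hμS : μ Sᶜ = 0) {g : X → ℝ} (hg : ContinuousOn g S) : Integrable g μ := by
  rw [← Measure.restrict_eq_self_of_ae_mem (measure_eq_zero_iff_ae_notMem.1 hμS |>.mono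
    fun x hx => by simpa using hx)]
  exact hg.integrableOn_compact hS

theorem stmt11_general (n : ℕ) (μ : Measure (Euc n)) [IsFiniteMeasure μ]
    (hμsupp : μ (usphere n)ᶜ = 0)
    (hμhemi : ∀ v ∈ usphere n, 0 < ∫ u, max ⟪u, v⟫ 0 ∂μ)
    (K : ℕ → Set (Euc n))
    (hK : ∀ i, Convex ℝ (K i) ∧ IsCompact (K i) ∧ 0 ∈ interior (K i))
    (R : ℝ) (hR : 0 < R) (hKR : ∀ i, polarBody n (K i) ⊆ closedBall 0 R)
    (L : Set (Euc n)) (hLconv : Convex ℝ L) (hLcomp : IsCompact L)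
    (hLint : (interior L).Nonempty) (hL0 : 0 ∈ frontier L)
    (hconv : Tendsto (fun i => Metric.hausdorffDist (polarBody n (K i)) L) atTop (𝓝 0))
    (φ : ℝ → ℝ) (hφc : ContinuousOn φ (Ioi 0)) (hφm : StrictMonoOn φ (Ioi 0))
    (hφtop : Tendsto φ atTop atTop) :
    Tendsto (fun i => (1 / (μ univ).toReal) * ∫ u, φ (suppFn n (K i) u) ∂μ)
      atTop atTop := by
  have hKb i : Bornology.IsBounded (K i) := (hK i).2.1.isBounded
  have hK'b i : Bornology.IsBounded (polarBody n (K i)) := isBounded_closedBall.subset (hKR i)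
  have hpos i (u : Euc n) (hu : u ∈ usphere n) : 0 < suppFn n (K i) u :=
    suppFn_pos (hKb i) (hK i).2.2 (ne_zero_of_mem_unit_sphere ⟨u, hu⟩)
  obtain ⟨w, hw, hLw⟩ := exists_unit_inner_le_of_notMem_interior hLconv hLint hL0.2
  obtain ⟨ε, hε, hcap⟩ := exists_pos_measure_setOf_le_of_integral_max_pos
    (hμhemi w (by simpa [usphere] using hw))
  have hs : Tendsto (fun i => suppFn n (polarBody n (K i)) w) atTop (𝓝 0) :=
    tendsto_suppFn_of_tendsto_hausdorffDist hK'b (fun _ => zero_mem_polarBody) hLcomp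
      (hLint.mono interior_subset) hw (fun y hy => by simpa using hLw y hy) hconv
  have hsph : ∀ᵐ u ∂μ, u ∈ usphere n :=
    (measure_eq_zero_iff_ae_notMem.1 hμsupp).mono fun u hu => by simpa using hu
  have hμpos : 0 < 1 / (μ univ).toReal := one_div_pos.2 <|
    ENNReal.toReal_pos (fun h => hcap (measure_mono_null (subset_univ _) h)) (measure_ne_top _ _)
  refine (tendsto_integral_atTop_of_tendsto_atTop_on (measurableSet_le measurable_const
    (continuous_id.inner continuous_const).measurable) hcap (φ R⁻¹) (fun i => ?_) (fun i => ?_)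
    fun M => ?_).const_mul_atTop hμpos
  · refine integrable_of_continuousOn_of_measure_compl_eq_zero (isCompact_sphere 0 1) hμsupp ?_
    exact hφc.comp (continuous_suppFn (hKb i) ⟨0, interior_subset (hK i).2.2⟩).continuousOn
      fun u hu => hpos i u hu
  · filter_upwards [hsph] with u hu
    exact hφm.monotoneOn (inv_pos.2 hR) (hpos i u hu) <|
      inv_le_suppFn_of_polarBody_subset (hKb i) (hKR i) (by simpa [usphere] using hu) (hpos i u hu)
  · obtain ⟨T, hTR, hTM⟩ := ((eventually_ge_atTop R⁻¹).and (hφtop.eventually_ge_atTop M)).exists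
    filter_upwards [eventually_le_suppFn_of_tendsto_suppFn_polarBody hKb (fun i => (hK i).2.2)
      hK'b hs hε T] with i hi
    filter_upwards [hsph] with u hu hA
    exact hTM.trans (hφm.monotoneOn ((inv_pos.2 hR).trans_le hTR) (hpos i u hu) (hi u hA))

theorem stmt11 (n : ℕ) (μ : Measure (Euc n)) [IsFiniteMeasure μ] (hμ0 : μ ≠ 0)
    (hμsupp : μ (usphere n)ᶜ = 0)
    (hμhemi : ∀ v ∈ usphere n, 0 < ∫ u, max ⟪u, v⟫ 0 ∂μ)
    (K : ℕ → Set (Euc n))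
    (hK : ∀ i, Convex ℝ (K i) ∧ IsCompact (K i) ∧ 0 ∈ interior (K i))
    (R : ℝ) (hR : 0 < R) (hKR : ∀ i, polarBody n (K i) ⊆ closedBall 0 R)
    (L : Set (Euc n)) (hLconv : Convex ℝ L) (hLcomp : IsCompact L)
    (hLint : (interior L).Nonempty) (hL0 : 0 ∈ frontier L)
    (hconv : Tendsto (fun i => Metric.hausdorffDist (polarBody n (K i)) L) atTop (𝓝 0))
    (φ : ℝ → ℝ) (hφc : ContinuousOn φ (Ioi 0)) (hφm : StrictMonoOn φ (Ioi 0))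
    (hφtop : Tendsto φ atTop atTop) :
    Tendsto (fun i => (1 / (μ univ).toReal) * ∫ u, φ (suppFn n (K i) u) ∂μ)
      atTop atTop :=
  stmt11_general n μ hμsupp hμhemi K hK R hR hKR L hLconv hLcomp hLint hL0 hconv φ hφc hφm hφtop
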